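/- Let (F,R) be a nonempty compact metric space, (M,d) a separable metric space, (Ω,𝓕,P) a probability space, and for each x ∈ F let X(x) : Ω → M be a Borel-measurable random element of M. Let r, q : (0,∞) → [0,∞) be non-decreasing functions satisfying condition (B): P( d(X(x),X(y)) > r(R(x,y)) ) ≤ q(R(x,y)) for all distinct x, y ∈ F. Then there exists a countable dense subset D of F such that, for each n ≥ 0, P( sup{ d(X(x),X(y)) : x,y ∈ D, R(x,y) < 2^{-n+1} } > 2 Σ_{k≥n} r(2^{-k+3}) ) ≤ Σ_{k≥n} (k+1)^2 · N_R(F, 2^{-k})^2 · q(2^{-k+3}). -/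
import Mathlib


open MeasureTheory Filter Set
open scoped ENNReal NNReal Topology

/-- The metric entropy `N_d(K, ε)` of a subset `K` of a metric space: the minimal cardinality
of a finite subset `A ⊆ K` such that every point of `K` is within distance `ε` of `A`. -/
noncomputable def coveringNumber {S : Type*} [MetricSpace S] (K : Set S) (ε : ℝ) : ℕ :=
  sInf {n : ℕ | ∃ A : Finset S, ↑A ⊆ K ∧ A.card = n ∧ ∀ x ∈ K, ∃ a ∈ A, dist x a ≤ ε}

lemma exists_cover {S : Type*} [MetricSpace S] [CompactSpace S] (ε : ℝ) (hε : 0 < ε) :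
    ∃ A : Finset S, (∀ x : S, ∃ a ∈ A, dist x a ≤ ε) ∧
      A.card = coveringNumber (Set.univ : Set S) ε := by
  have hne : {n : ℕ | ∃ A : Finset S, ↑A ⊆ (Set.univ : Set S) ∧ A.card = n ∧
      ∀ x ∈ (Set.univ : Set S), ∃ a ∈ A, dist x a ≤ ε}.Nonempty := by
    obtain ⟨t, ht⟩ := IsCompact.elim_finite_subcover isCompact_univ
      (fun i : S => Metric.ball i ε) (fun i => Metric.isOpen_ball)
      (fun x _ => by exact Set.mem_iUnion.2 ⟨x, Metric.mem_ball_self hε⟩)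
    exact ⟨t.card, t, by simp, rfl, fun x _ => by
      obtain ⟨a, ha, hxa⟩ := Set.mem_iUnion₂.1 (ht (Set.mem_univ x))
      exact ⟨a, ha, le_of_lt hxa⟩⟩
  obtain ⟨A, -, hcard, hcov⟩ := Nat.sInf_mem hne
  exact ⟨A, fun x => hcov x (Set.mem_univ x), hcard⟩

lemma coveringNumber_mono {S : Type*} [MetricSpace S] [CompactSpace S] {ε ε' : ℝ}
    (hε' : 0 < ε') (h : ε' ≤ ε) :
    coveringNumber (Set.univ : Set S) ε ≤ coveringNumber (Set.univ : Set S) ε' := by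
  obtain ⟨A, hA, hcard⟩ := exists_cover (S := S) ε' hε'
  rw [← hcard]
  exact Nat.sInf_le ⟨A, by simp, rfl, fun x _ => by
    obtain ⟨a, ha, hxa⟩ := hA x; exact ⟨a, ha, hxa.trans h⟩⟩

/-- (Corollary: equicontinuity of a stochastic process with compact index set.)
If `F` is compact and condition (B) holds, then there exists a countable dense subset `D ⊆ F`
such that for each `n ≥ 0`,
`P( sup_{x,y ∈ D, R(x,y) < 2^{-n+1}} d(X(x),X(y)) > 2 Σ_{k ≥ n} r(2^{-k+3}) )
  ≤ Σ_{k ≥ n} (k+1)² N_R(F,2^{-k})² q(2^{-k+3})`. -/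
theorem stmt1 {F M Ω : Type*} [MetricSpace F] [CompactSpace F] [Nonempty F]
    [MetricSpace M] [TopologicalSpace.SeparableSpace M] [MeasurableSpace M] [BorelSpace M]
    [MeasurableSpace Ω] (P : Measure Ω) [IsProbabilityMeasure P]
    (X : F → Ω → M) (hX : ∀ x, Measurable (X x))
    (r q : ℝ → ℝ)
    (hr0 : ∀ u, 0 < u → 0 ≤ r u) (hq0 : ∀ u, 0 < u → 0 ≤ q u)
    (hrmono : MonotoneOn r (Set.Ioi 0)) (hqmono : MonotoneOn q (Set.Ioi 0))
    (hB : ∀ x y : F, x ≠ y →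
      P {ω | r (dist x y) < dist (X x ω) (X y ω)} ≤ ENNReal.ofReal (q (dist x y))) :
    ∃ D : Set F, D.Countable ∧ Dense D ∧ ∀ n : ℕ,
      P {ω | ∃ x ∈ D, ∃ y ∈ D,
          dist x y < (2 : ℝ) ^ (1 - (n : ℤ)) ∧
          2 * ∑' k : ℕ, ENNReal.ofReal (r ((2 : ℝ) ^ (3 - ((n + k : ℕ) : ℤ))))
            < edist (X x ω) (X y ω)} ≤
        ∑' k : ℕ,
          (((n + k : ℕ) + 1 : ℝ≥0∞) ^ 2) *
            ((coveringNumber (Set.univ : Set F) ((2 : ℝ) ^ (-((n + k : ℕ) : ℤ))) : ℝ≥0∞)) ^ 2 *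
            ENNReal.ofReal (q ((2 : ℝ) ^ (3 - ((n + k : ℕ) : ℤ)))) := by
  classical
  -- scales
  set e : ℕ → ℝ := fun j => (2 : ℝ) ^ (-(j : ℤ)) with he
  set c : ℕ → ℝ := fun j => (2 : ℝ) ^ (3 - (j : ℤ)) with hc
  have he0 : ∀ j, 0 < e j := fun j => by positivity
  have hc0 : ∀ j, 0 < c j := fun j => by positivity
  have hesucc : ∀ j : ℕ, 2 * e (j + 1) = e j := by
    intro j
    show 2 * (2 : ℝ) ^ (-((j + 1 : ℕ) : ℤ)) = (2 : ℝ) ^ (-(j : ℤ))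
    rw [show (-((j + 1 : ℕ) : ℤ)) = (-(j : ℤ)) + (-1) by push_cast; ring,
      zpow_add₀ (by norm_num : (2 : ℝ) ≠ 0)]
    norm_num
    ring
  have hce : ∀ j : ℕ, c j = 8 * e j := by
    intro j
    show (2 : ℝ) ^ (3 - (j : ℤ)) = 8 * (2 : ℝ) ^ (-(j : ℤ))
    rw [show (3 - (j : ℤ)) = 3 + (-(j : ℤ)) by ring,
      zpow_add₀ (by norm_num : (2 : ℝ) ≠ 0)]
    norm_num
  set N : ℕ → ℕ := fun j => coveringNumber (Set.univ : Set F) (e j) with hN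
  -- nets
  have hA : ∀ j : ℕ, ∃ A : Finset F, (∀ x : F, ∃ a ∈ A, dist x a ≤ e j) ∧ A.card = N j :=
    fun j => exists_cover (e j) (he0 j)
  choose A hAcov hAcard using hA
  set B : ℕ → Finset F := fun j => (Finset.range (j + 1)).biUnion A with hBdef
  have hAB : ∀ j, A j ⊆ B j := fun j =>
    Finset.subset_biUnion_of_mem A (Finset.self_mem_range_succ j)
  have hBmono : ∀ {i j : ℕ}, i ≤ j → B i ⊆ B j := by
    intro i j hij
    exact Finset.biUnion_subset_biUnion_of_subset_left A
      (Finset.range_subset_range.2 (by omega))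
  have hNmono : ∀ {i j : ℕ}, i ≤ j → N i ≤ N j := by
    intro i j hij
    exact coveringNumber_mono (he0 j)
      (by apply zpow_le_zpow_right₀ (by norm_num : (1:ℝ) ≤ 2); omega)
  have hBcard : ∀ j, (B j).card ≤ (j + 1) * N j := by
    intro j
    calc (B j).card ≤ ∑ i ∈ Finset.range (j + 1), (A i).card := Finset.card_biUnion_le
      _ ≤ ∑ i ∈ Finset.range (j + 1), N j := by
          apply Finset.sum_le_sum
          intro i hi
          rw [hAcard]
          exact hNmono (by simpa using Nat.lt_succ_iff.1 (Finset.mem_range.1 hi))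
      _ = (j + 1) * N j := by simp [Finset.sum_const, mul_comm]
  -- projections
  have hπ : ∀ (j : ℕ) (x : F), ∃ a ∈ B j, dist x a ≤ e j := by
    intro j x
    obtain ⟨a, ha, hxa⟩ := hAcov j x
    exact ⟨a, hAB j ha, hxa⟩
  choose π hπB hπd using hπ
  -- the countable dense set
  refine ⟨⋃ j, (B j : Set F), countable_iUnion (fun j => (B j).countable_toSet), ?_, ?_⟩
  · rw [Metric.dense_iff]
    intro x ε hε
    obtain ⟨j, hj⟩ := exists_pow_lt_of_lt_one hε (by norm_num : (1:ℝ)/2 < 1)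
    refine ⟨π j x, Metric.mem_ball'.2 (lt_of_le_of_lt (hπd j x) ?_),
      Set.mem_iUnion.2 ⟨j, hπB j x⟩⟩
    calc e j = ((1:ℝ)/2) ^ j := by
          show (2:ℝ) ^ (-(j : ℤ)) = ((1:ℝ)/2) ^ j
          rw [show ((1:ℝ)/2) = 2⁻¹ by norm_num, ← zpow_natCast ((2:ℝ)⁻¹), inv_zpow,
            ← zpow_neg]
      _ < ε := hj
  · intro n
    -- bad events
    set S : ℕ → F × F → Set Ω := fun j p =>
      {ω | dist p.1 p.2 ≤ c j ∧ r (c j) < dist (X p.1 ω) (X p.2 ω)} with hSdef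
    set E : ℕ → Set Ω := fun j => ⋃ p ∈ (B j) ×ˢ (B j), S j p with hEdef
    -- per-level bound
    have hPE : ∀ j, P (E j) ≤
        (((j : ℝ≥0∞) + 1) ^ 2) * ((N j : ℝ≥0∞)) ^ 2 * ENNReal.ofReal (q (c j)) := by
      intro j
      have h1 : P (E j) ≤ ∑ p ∈ (B j) ×ˢ (B j), P (S j p) := measure_biUnion_finset_le _ _
      have h2 : ∀ p ∈ (B j) ×ˢ (B j), P (S j p) ≤ ENNReal.ofReal (q (c j)) := by
        rintro ⟨a, b⟩ -
        by_cases hab : a = b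
        · have hSe : S j (a, b) = ∅ := by
            ext ω
            simp only [hSdef, Set.mem_setOf_eq, Set.mem_empty_iff_false, iff_false, not_and,
              not_lt, hab]
            intro _
            simp only [dist_self]
            exact hr0 _ (hc0 j)
          simp [hSe]
        · by_cases hd : dist a b ≤ c j
          · have hdpos : 0 < dist a b := dist_pos.2 hab
            have hsub : S j (a, b) ⊆ {ω | r (dist a b) < dist (X a ω) (X b ω)} := by
              intro ω hω
              exact lt_of_le_of_lt (hrmono hdpos (hc0 j) hd) hω.2
            calc P (S j (a, b)) ≤ P {ω | r (dist a b) < dist (X a ω) (X b ω)} :=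
                  measure_mono hsub
              _ ≤ ENNReal.ofReal (q (dist a b)) := hB a b hab
              _ ≤ ENNReal.ofReal (q (c j)) :=
                  ENNReal.ofReal_le_ofReal (hqmono hdpos (hc0 j) hd)
          · have hSe : S j (a, b) = ∅ := by
              ext ω
              simp only [hSdef, Set.mem_setOf_eq, Set.mem_empty_iff_false, iff_false, not_and]
              intro h; exact absurd h hd
            simp [hSe]
      have hcardB : ((B j).card : ℝ≥0∞) ≤ ((j : ℝ≥0∞) + 1) * (N j : ℝ≥0∞) := by
        calc ((B j).card : ℝ≥0∞) ≤ (((j + 1) * N j : ℕ) : ℝ≥0∞) := Nat.cast_le.mpr (hBcard j)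
          _ = ((j : ℝ≥0∞) + 1) * (N j : ℝ≥0∞) := by rw [Nat.cast_mul]; push_cast; ring
      calc P (E j) ≤ ∑ p ∈ (B j) ×ˢ (B j), P (S j p) := h1
        _ ≤ ∑ _p ∈ (B j) ×ˢ (B j), ENNReal.ofReal (q (c j)) := Finset.sum_le_sum h2
        _ = (((B j) ×ˢ (B j)).card : ℝ≥0∞) * ENNReal.ofReal (q (c j)) := by
            rw [Finset.sum_const, nsmul_eq_mul]
        _ ≤ (((j : ℝ≥0∞) + 1) ^ 2) * ((N j : ℝ≥0∞)) ^ 2 * ENNReal.ofReal (q (c j)) := by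
            apply mul_le_mul_left
            have hpc : (((B j) ×ˢ (B j)).card : ℝ≥0∞)
                = ((B j).card : ℝ≥0∞) * ((B j).card : ℝ≥0∞) := by
              rw [Finset.card_product, Nat.cast_mul]
            rw [hpc]
            calc ((B j).card : ℝ≥0∞) * ((B j).card : ℝ≥0∞)
                ≤ (((j : ℝ≥0∞) + 1) * (N j : ℝ≥0∞)) * (((j : ℝ≥0∞) + 1) * (N j : ℝ≥0∞)) :=
                  mul_le_mul' hcardB hcardB
              _ = (((j : ℝ≥0∞) + 1) ^ 2) * ((N j : ℝ≥0∞)) ^ 2 := by ring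
    -- the event is contained in the union of bad events
    set ρ : ℕ → ℝ := fun j => r (c j) with hρ
    have hρ0 : ∀ j, 0 ≤ ρ j := fun j => hr0 _ (hc0 j)
    have hsub : {ω | ∃ x ∈ ⋃ j, (B j : Set F), ∃ y ∈ ⋃ j, (B j : Set F),
        dist x y < (2 : ℝ) ^ (1 - (n : ℤ)) ∧
        2 * ∑' k : ℕ, ENNReal.ofReal (r ((2 : ℝ) ^ (3 - ((n + k : ℕ) : ℤ))))
          < edist (X x ω) (X y ω)} ⊆ ⋃ k : ℕ, E (n + k) := by
      intro ω hω
      obtain ⟨x, hx, y, hy, hxy, hlt⟩ := hω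
      by_contra hcon
      have hgood : ∀ j, n ≤ j → ∀ a ∈ B j, ∀ b ∈ B j, dist a b ≤ c j →
          dist (X a ω) (X b ω) ≤ r (c j) := by
        intro j hj a ha b hb hd
        by_contra hbad
        apply hcon
        refine Set.mem_iUnion.2 ⟨j - n, ?_⟩
        have hjn : n + (j - n) = j := by omega
        rw [hjn]
        exact Set.mem_iUnion₂.2 ⟨(a, b), Finset.mem_product.2 ⟨ha, hb⟩,
          ⟨hd, not_le.1 hbad⟩⟩
      -- chaining
      have chain : ∀ m : ℕ, ∀ z : F,
          dist (X (π (n + m) z) ω) (X (π n z) ω) ≤ ∑ j ∈ Finset.Icc (n + 1) (n + m), ρ j := by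
        intro m
        induction m with
        | zero => intro z; simp
        | succ m ih =>
          intro z
          have hlink : dist (X (π (n + m + 1) z) ω) (X (π (n + m) z) ω) ≤ ρ (n + m + 1) := by
            apply hgood (n + m + 1) (by omega) _ (hπB _ z) _ (hBmono (by omega) (hπB _ z))
            calc dist (π (n + m + 1) z) (π (n + m) z)
                ≤ dist (π (n + m + 1) z) z + dist z (π (n + m) z) := dist_triangle _ _ _
              _ ≤ e (n + m + 1) + e (n + m) := by
                  refine add_le_add ?_ (hπd _ z)
                  rw [dist_comm]; exact hπd _ z
              _ ≤ c (n + m + 1) := by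
                  have h1 := hesucc (n + m)
                  have h2 := hce (n + m + 1)
                  have h3 := he0 (n + m + 1)
                  linarith
          calc dist (X (π (n + (m + 1)) z) ω) (X (π n z) ω)
              ≤ dist (X (π (n + m + 1) z) ω) (X (π (n + m) z) ω)
                + dist (X (π (n + m) z) ω) (X (π n z) ω) := by
                  rw [show n + (m + 1) = n + m + 1 by omega]
                  exact dist_triangle _ _ _
            _ ≤ ρ (n + m + 1) + ∑ j ∈ Finset.Icc (n + 1) (n + m), ρ j :=
                add_le_add hlink (ih z)
            _ = ∑ j ∈ Finset.Icc (n + 1) (n + (m + 1)), ρ j := by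
                rw [show n + (m + 1) = (n + m) + 1 by omega,
                  Finset.sum_Icc_succ_top (by omega)]
                ring
      obtain ⟨mx, hmx⟩ := Set.mem_iUnion.1 hx
      obtain ⟨my, hmy⟩ := Set.mem_iUnion.1 hy
      set mm : ℕ := max mx my with hmm
      have hxB : x ∈ B (n + mm + 1) := hBmono (by omega) hmx
      have hyB : y ∈ B (n + mm + 1) := hBmono (by omega) hmy
      -- one side of the chain
      have hside : ∀ z : F, z ∈ B (n + mm + 1) →
          dist (X z ω) (X (π n z) ω) ≤ ∑ j ∈ Finset.Icc (n + 1) (n + mm + 1), ρ j := by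
        intro z hz
        have hlink : dist (X z ω) (X (π (n + mm) z) ω) ≤ ρ (n + mm + 1) := by
          apply hgood (n + mm + 1) (by omega) _ hz _ (hBmono (by omega) (hπB _ z))
          calc dist z (π (n + mm) z) ≤ e (n + mm) := hπd _ z
            _ ≤ c (n + mm + 1) := by
                have h1 := hesucc (n + mm)
                have h2 := hce (n + mm + 1)
                have h3 := he0 (n + mm + 1)
                linarith
        calc dist (X z ω) (X (π n z) ω)
            ≤ dist (X z ω) (X (π (n + mm) z) ω)
              + dist (X (π (n + mm) z) ω) (X (π n z) ω) := dist_triangle _ _ _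
          _ ≤ ρ (n + mm + 1) + ∑ j ∈ Finset.Icc (n + 1) (n + mm), ρ j :=
              add_le_add hlink (chain mm z)
          _ = ∑ j ∈ Finset.Icc (n + 1) (n + mm + 1), ρ j := by
              rw [Finset.sum_Icc_succ_top (by omega)]; ring
      -- middle link
      have hmid : dist (X (π n x) ω) (X (π n y) ω) ≤ ρ n := by
        apply hgood n le_rfl _ (hπB n x) _ (hπB n y)
        have h2n : (2 : ℝ) ^ (1 - (n : ℤ)) = 2 * e n := by
          show (2:ℝ) ^ (1 - (n : ℤ)) = 2 * (2:ℝ) ^ (-(n : ℤ))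
          rw [show (1 - (n : ℤ)) = 1 + (-(n : ℤ)) by ring,
            zpow_add₀ (by norm_num : (2 : ℝ) ≠ 0)]
          norm_num
        calc dist (π n x) (π n y)
            ≤ dist (π n x) x + dist x (π n y) := dist_triangle _ _ _
          _ ≤ e n + (dist x y + dist y (π n y)) := by
              refine add_le_add (by rw [dist_comm]; exact hπd n x) ?_
              exact dist_triangle _ _ _
          _ ≤ e n + (2 * e n + e n) := by
              have := hπd n y
              have hxy' : dist x y ≤ 2 * e n := by rw [← h2n]; exact le_of_lt hxy
              linarith
          _ ≤ c n := by rw [hce n]; linarith [he0 n]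
      -- total deterministic bound
      have htot : dist (X x ω) (X y ω)
          ≤ 2 * (∑ j ∈ Finset.Icc (n + 1) (n + mm + 1), ρ j) + ρ n := by
        calc dist (X x ω) (X y ω)
            ≤ dist (X x ω) (X (π n x) ω) + dist (X (π n x) ω) (X (π n y) ω)
              + dist (X (π n y) ω) (X y ω) := dist_triangle4 _ _ _ _
          _ ≤ (∑ j ∈ Finset.Icc (n + 1) (n + mm + 1), ρ j) + ρ n
              + (∑ j ∈ Finset.Icc (n + 1) (n + mm + 1), ρ j) := by
              refine add_le_add (add_le_add (hside x hxB) hmid) ?_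
              rw [dist_comm (X (π n y) ω)]
              exact hside y hyB
          _ = 2 * (∑ j ∈ Finset.Icc (n + 1) (n + mm + 1), ρ j) + ρ n := by ring
      have hsum_eq : ∑ j ∈ Finset.Icc n (n + mm + 1), ρ j
          = ρ n + ∑ j ∈ Finset.Icc (n + 1) (n + mm + 1), ρ j := by
        rw [Finset.Icc_add_one_left_eq_Ioc, ← Finset.Ioc_insert_left (by omega : n ≤ n + mm + 1),
          Finset.sum_insert (by simp)]
      have htot2 : dist (X x ω) (X y ω) ≤ 2 * ∑ j ∈ Finset.Icc n (n + mm + 1), ρ j := by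
        rw [hsum_eq]
        have := hρ0 n
        linarith
      have hE : edist (X x ω) (X y ω)
          ≤ 2 * ∑' k : ℕ, ENNReal.ofReal (ρ (n + k)) := by
        rw [edist_dist]
        calc ENNReal.ofReal (dist (X x ω) (X y ω))
            ≤ ENNReal.ofReal (2 * ∑ j ∈ Finset.Icc n (n + mm + 1), ρ j) :=
              ENNReal.ofReal_le_ofReal htot2
          _ = 2 * ENNReal.ofReal (∑ j ∈ Finset.Icc n (n + mm + 1), ρ j) := by
              rw [ENNReal.ofReal_mul (by norm_num : (0:ℝ) ≤ 2), ENNReal.ofReal_ofNat]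
          _ = 2 * ∑ j ∈ Finset.Icc n (n + mm + 1), ENNReal.ofReal (ρ j) := by
              rw [ENNReal.ofReal_sum_of_nonneg (fun j _ => hρ0 j)]
          _ = 2 * ∑ i ∈ Finset.range (n + mm + 1 + 1 - n), ENNReal.ofReal (ρ (n + i)) := by
              rw [← Finset.Ico_add_one_right_eq_Icc, Finset.sum_Ico_eq_sum_range]
          _ ≤ 2 * ∑' k : ℕ, ENNReal.ofReal (ρ (n + k)) := by
              gcongr
              exact ENNReal.sum_le_tsum _
      exact absurd hlt (not_lt.2 hE)
    calc P {ω | ∃ x ∈ ⋃ j, (B j : Set F), ∃ y ∈ ⋃ j, (B j : Set F),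
          dist x y < (2 : ℝ) ^ (1 - (n : ℤ)) ∧
          2 * ∑' k : ℕ, ENNReal.ofReal (r ((2 : ℝ) ^ (3 - ((n + k : ℕ) : ℤ))))
            < edist (X x ω) (X y ω)}
        ≤ P (⋃ k : ℕ, E (n + k)) := measure_mono hsub
      _ ≤ ∑' k : ℕ, P (E (n + k)) := measure_iUnion_le _
      _ ≤ ∑' k : ℕ, (((n + k : ℕ) : ℝ≥0∞) + 1) ^ 2 * ((N (n + k) : ℝ≥0∞)) ^ 2
            * ENNReal.ofReal (q (c (n + k))) := ENNReal.tsum_le_tsum (fun k => hPE (n + k))
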